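/- arXiv:1208.3941 — 9 statements merged into one kernel-verified Lean document; each statement's English description precedes it below -/
import Mathlib

section
/- Let a : U → V be a linear map between vector spaces over a field F, and let θ ∈ U** be in the kernel of the double adjoint a** : U** → V**. Then for every finite family of functionals ρ₁, …, ρₙ ∈ U* there exists ξ ∈ ker a such that ρⱼ(ξ) = θ(ρⱼ) for all j = 1, …, n. -/
/-- Every element of the kernel of the double adjoint `a** : U** → V**` can be
finitely interpolated by elements of `ker a`. -/
theorem ker_double_dualMap_interpolation
    {F U V : Type*} [Field F] [AddCommGroup U] [Module F U]
    [AddCommGroup V] [Module F V] (a : U →ₗ[F] V)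
    (θ : Module.Dual F (Module.Dual F U))
    (hθ : θ ∈ LinearMap.ker a.dualMap.dualMap)
    (n : ℕ) (ρ : Fin n → Module.Dual F U) :
    ∃ ξ : U, ξ ∈ LinearMap.ker a ∧ ∀ j : Fin n, ρ j ξ = θ (ρ j) := by
  classical
  set K := LinearMap.ker a
  -- Φ : K → F^n, evaluation of the ρⱼ's
  set Φ : K →ₗ[F] (Fin n → F) := LinearMap.pi (fun j => (ρ j).comp K.subtype) with hΦ
  set t : Fin n → F := fun j => θ (ρ j) with ht
  by_contra h
  have htW : t ∉ LinearMap.range Φ := by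
    rintro ⟨ξ, hξ⟩
    exact h ⟨ξ, ξ.2, fun j => congrFun hξ j⟩
  obtain ⟨f, hft, hfW⟩ :=
    (LinearMap.range Φ).exists_dual_map_eq_bot_of_notMem htW inferInstance
  have hfW' : ∀ ξ : K, f (Φ ξ) = 0 := by
    intro ξ
    have : f (Φ ξ) ∈ (LinearMap.range Φ).map f := ⟨Φ ξ, ⟨ξ, rfl⟩, rfl⟩
    rwa [hfW, Submodule.mem_bot] at this
  -- the functional ρ' = ∑ f(eⱼ) • ρⱼ vanishes on ker a
  set ρ' : Module.Dual F U := ∑ i, f (fun j => if i = j then 1 else 0) • ρ i with hρ'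
  have hann : ρ' ∈ K.dualAnnihilator := by
    rw [Submodule.mem_dualAnnihilator]
    intro w hw
    have := hfW' ⟨w, hw⟩
    rw [LinearMap.pi_apply_eq_sum_univ f (Φ ⟨w, hw⟩)] at this
    have key : ρ' w = ∑ i, Φ ⟨w, hw⟩ i • f (fun j => if i = j then 1 else 0) := by
      rw [hρ']
      simp only [LinearMap.sum_apply, LinearMap.smul_apply, smul_eq_mul]
      refine Finset.sum_congr rfl fun i _ => ?_
      simp [hΦ, mul_comm]
    exact key.trans this
  -- hence ρ' = a* σ for some σ, so θ ρ' = 0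
  rw [← LinearMap.range_dualMap_eq_dualAnnihilator_ker] at hann
  obtain ⟨σ, hσ⟩ := hann
  have hθρ' : θ ρ' = 0 := by
    rw [← hσ]
    have : a.dualMap.dualMap θ σ = 0 := by
      rw [LinearMap.mem_ker.mp hθ]; rfl
    simpa using this
  -- but θ ρ' = f t ≠ 0
  refine hft ?_
  have key : f t = θ ρ' := by
    rw [LinearMap.pi_apply_eq_sum_univ f t, hρ']
    simp only [map_sum, LinearMap.map_smul, smul_eq_mul]
    exact Finset.sum_congr rfl fun i _ => mul_comm _ _
  exact key.trans hθρ'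
end

section
/- Let W be a subspace of a vector space U over a field F. Then every element of the double annihilator W^⊥⊥ ⊆ U** can be finitely interpolated by elements of W: for every θ ∈ W^⊥⊥ and every finite set ρ₁,…,ρₙ ∈ U* there exists w ∈ W with ρⱼ(w) = θ(ρⱼ) for all j. -/
/-- Every element of the double annihilator `W^⊥⊥ ⊆ U**` of a subspace `W ⊆ U`
can be finitely interpolated by elements of `W`. -/
theorem double_dualAnnihilator_interpolation
    {F U : Type*} [Field F] [AddCommGroup U] [Module F U]
    (W : Submodule F U) (θ : Module.Dual F (Module.Dual F U))
    (hθ : θ ∈ W.dualAnnihilator.dualAnnihilator)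
    (n : ℕ) (ρ : Fin n → Module.Dual F U) :
    ∃ w : U, w ∈ W ∧ ∀ j : Fin n, ρ j w = θ (ρ j) := by
  classical
  have hsingle : ∀ x : Fin n, (fun j => if x = j then (1:F) else 0) = Pi.single x 1 := by
    intro x; funext j; simp [Pi.single_apply, eq_comm]
  set Φ : U →ₗ[F] (Fin n → F) := LinearMap.pi ρ with hΦ
  set V : Submodule F (Fin n → F) := W.map Φ with hV
  set t : Fin n → F := fun j => θ (ρ j) with ht
  have htV : t ∈ V := by
    rw [← Subspace.forall_mem_dualAnnihilator_apply_eq_zero_iff V t]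
    intro f hf
    rw [Submodule.mem_dualAnnihilator] at hf
    set σ : Module.Dual F U := ∑ j, f (Pi.single j 1) • ρ j with hσdef
    have hσ : σ ∈ W.dualAnnihilator := by
      rw [Submodule.mem_dualAnnihilator]
      intro w hw
      have h1 : f (Φ w) = 0 := hf (Φ w) ⟨w, hw, rfl⟩
      have h2 : f (Φ w) = σ w := by
        conv_lhs => rw [pi_eq_sum_univ (Φ w), map_sum]
        simp [hσdef, hΦ, LinearMap.pi_apply, mul_comm, hsingle]
      rw [h2] at h1
      exact h1
    have h0 : θ σ = 0 := (Submodule.mem_dualAnnihilator _).mp hθ σ hσ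
    have hft : f t = θ σ := by
      conv_lhs => rw [pi_eq_sum_univ t, map_sum]
      simp [hσdef, ht, mul_comm, hsingle]
    rw [hft, h0]
  obtain ⟨w, hw, hwt⟩ := htV
  exact ⟨w, hw, fun j => by
    have := congrFun hwt j
    simpa [hΦ, LinearMap.pi_apply, ht] using this⟩
end

section
/- A module V over the polynomial ring F[t] (F a field) is torsion-free if and only if its F-linear dual V*, with the module structure (ρ·p)(ξ) = ρ(p·ξ), is a divisible F[t]-module. -/
/-- The `F`-linear endomorphism of an `F[t]`-module `V` given by multiplication by
a polynomial `p`. -/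
noncomputable def polySmulEnd {F V : Type*} [Field F] [AddCommGroup V] [Module F V]
    [Module (Polynomial F) V] [SMulCommClass (Polynomial F) F V]
    (p : Polynomial F) : Module.End F V where
  toFun ξ := p • ξ
  map_add' x y := smul_add p x y
  map_smul' c ξ := smul_comm p c ξ

/-- A module `V` over `F[t]` is torsion-free if and only if its `F`-linear dual,
with the right module structure `(ρ·p)(ξ) = ρ(p·ξ)`, is divisible. -/
theorem torsionFree_iff_dual_divisible
    {F V : Type*} [Field F] [AddCommGroup V] [Module F V]
    [Module (Polynomial F) V] [IsScalarTower F (Polynomial F) V]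
    [SMulCommClass (Polynomial F) F V] :
    (∀ (p : Polynomial F) (ξ : V), p • ξ = 0 → p = 0 ∨ ξ = 0) ↔
      (∀ p : Polynomial F, p ≠ 0 → ∀ ρ : Module.Dual F V,
        ∃ ω : Module.Dual F V, ρ = ω ∘ₗ polySmulEnd p) := by
  constructor
  · intro h p hp ρ
    have hker : LinearMap.ker (polySmulEnd (V := V) p) = ⊥ := by
      rw [LinearMap.ker_eq_bot']
      intro ξ hξ
      rcases h p ξ hξ with h1 | h1
      · exact absurd h1 hp
      · exact h1
    obtain ⟨g, hg⟩ := LinearMap.exists_leftInverse_of_injective _ hker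
    refine ⟨ρ ∘ₗ g, ?_⟩
    rw [LinearMap.comp_assoc, hg, LinearMap.comp_id]
  · intro h p ξ hpξ
    by_cases hp : p = 0
    · exact Or.inl hp
    right
    by_contra hξ
    obtain ⟨φ, hφ⟩ : ∃ φ : Module.Dual F V, φ ξ ≠ 0 := by
      by_contra hc
      push_neg at hc
      exact hξ ((Module.forall_dual_apply_eq_zero_iff F ξ).mp hc)
    obtain ⟨ω, hω⟩ := h p hp φ
    apply hφ
    rw [hω]
    simp only [LinearMap.comp_apply]
    have : polySmulEnd (V := V) p ξ = 0 := hpξ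
    rw [this, map_zero]
end

section
/- Let F be a field, V = F^(ℕ) the space of finitely supported sequences, and a ∈ L(V) the right shift operator a(ξ₀, ξ₁, …) = (0, ξ₀, ξ₁, …). Then the bicommutant of a in L(V) equals the algebra of polynomials in a, i.e. {a}'' = F[a]. -/
/-- The commutant of a set of operators. -/
def commutant {F M : Type*} [Field F] [AddCommGroup M] [Module F M]
    (S : Set (Module.End F M)) : Set (Module.End F M) :=
  {x | ∀ s ∈ S, x * s = s * x}

/-- The right shift on the space `F^(ℕ)` of finitely supported sequences. -/
noncomputable def rightShift (F : Type*) [Field F] : Module.End F (ℕ →₀ F) :=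
  Finsupp.lmapDomain F F (fun n => n + 1)

lemma rightShift_single {F : Type*} [Field F] (k : ℕ) (b : F) :
    rightShift F (Finsupp.single k b) = Finsupp.single (k + 1) b := by
  simp [rightShift, Finsupp.mapDomain_single]

lemma rightShift_pow_single {F : Type*} [Field F] (n k : ℕ) (b : F) :
    ((rightShift F) ^ n) (Finsupp.single k b) = Finsupp.single (k + n) b := by
  induction n with
  | zero => simp
  | succ n ih =>
      rw [pow_succ', Module.End.mul_apply, ih, rightShift_single, add_assoc]

/-- The bicommutant of the right shift `a` on `F^(ℕ)` equals the algebra of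
polynomials in `a`. -/
theorem bicommutant_rightShift (F : Type*) [Field F] :
    commutant (commutant {rightShift F}) =
      Set.range (fun p : Polynomial F => Polynomial.aeval (rightShift F) p) := by
  set a := rightShift F with ha
  ext x
  constructor
  · intro hx
    have hxa : x * a = a * x := hx a (fun s hs => by simp_all)
    have hcomm : ∀ (n : ℕ) (w : ℕ →₀ F), x ((a ^ n) w) = (a ^ n) (x w) := by
      intro n w
      have h : x * a ^ n = a ^ n * x := Commute.pow_right hxa n
      have := congrFun (congrArg DFunLike.coe h) w
      simpa [Module.End.mul_apply] using this
    set v : ℕ →₀ F := x (Finsupp.single 0 1) with hv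
    refine ⟨Polynomial.ofFinsupp (AddMonoidAlgebra.ofCoeff v), ?_⟩
    apply LinearMap.ext
    intro w
    induction w using Finsupp.induction with
    | zero => simp
    | single_add k b f _ _ ih =>
        rw [map_add, map_add, ih]
        congr 1
        -- x (single k b) = a^k (x (single 0 b)) = b • a^k v
        have h1 : (Finsupp.single k b : ℕ →₀ F) = (a ^ k) (Finsupp.single 0 b) := by
          rw [rightShift_pow_single]; simp
        have h2 : x (Finsupp.single k b) = (a ^ k) (b • v) := by
          rw [h1]
          rw [hcomm k]
          congr 1
          have : (Finsupp.single 0 b : ℕ →₀ F) = b • Finsupp.single 0 1 := by simp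
          rw [this, map_smul, hv]
        rw [h2, Polynomial.aeval_endomorphism]
        -- RHS : (⟨v⟩).sum fun n c => c • a^n (single k b)
        have hsum : ((Polynomial.ofFinsupp (AddMonoidAlgebra.ofCoeff v)).sum fun n c => c • ((a ^ n) (Finsupp.single k b)))
            = v.sum fun n c => Finsupp.single (k + n) (c * b) := by
          rw [Polynomial.sum, Polynomial.support_ofFinsupp, Finsupp.sum]
          refine Finset.sum_congr rfl fun n hn => ?_
          rw [Polynomial.coeff_ofFinsupp, AddMonoidAlgebra.coeff_ofCoeff, rightShift_pow_single, Finsupp.smul_single, smul_eq_mul]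
        rw [hsum, map_smul]
        -- LHS : b • a^k v
        have hv' : (a ^ k) v = v.sum fun n c => Finsupp.single (k + n) c := by
          conv_lhs => rw [← Finsupp.sum_single v]
          rw [map_finsuppSum]
          refine Finsupp.sum_congr fun n hn => ?_
          rw [rightShift_pow_single, add_comm]
        rw [hv', Finsupp.smul_sum]
        refine Finsupp.sum_congr fun n hn => ?_
        rw [Finsupp.smul_single, smul_eq_mul, mul_comm]
  · rintro ⟨p, rfl⟩
    intro y hy
    have hya : Commute y a := hy a rfl
    have hca : Commute a y := hya.symm
    have : Commute (Polynomial.aeval a p) y := by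
      refine p.induction_on' (fun f g hf hg => by simpa [map_add] using hf.add_left hg)
        (fun n c => ?_)
      rw [Polynomial.aeval_monomial]
      exact (Algebra.commute_algebraMap_left c y).mul_left (hca.pow_left n)
    exact this
end

section
/- Let R = F[t] for a field F, let q ∈ R be a prime polynomial, and let V be a q-primary torsion R-module (every element is annihilated by some power of q). Then no nonzero element of the dual module V* is divisible by all powers of q: if ρ ∈ V* satisfies that for every n there exists ωₙ ∈ V* with ρ = qⁿ·ωₙ, then ρ = 0. -/
/-- If `V` is a `q`-primary torsion `F[t]`-module for a prime `q`, then no nonzero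
element of the dual `V*` is divisible by all powers of `q`. -/
theorem dual_no_divisible_elements_of_primary
    {F V : Type*} [Field F] [AddCommGroup V] [Module F V]
    [Module (Polynomial F) V] [IsScalarTower F (Polynomial F) V]
    [SMulCommClass (Polynomial F) F V]
    (q : Polynomial F) (hq : Irreducible q) (hqm : q.Monic)
    (hV : ∀ ξ : V, ∃ n : ℕ, q ^ n • ξ = 0)
    (ρ : Module.Dual F V)
    (hρ : ∀ n : ℕ, ∃ ω : Module.Dual F V, ρ = ω ∘ₗ polySmulEnd (q ^ n)) :
    ρ = 0 := by
  ext ξ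
  obtain ⟨n, hn⟩ := hV ξ
  obtain ⟨ω, hω⟩ := hρ n
  simp [hω, polySmulEnd, hn]
end

section
/- Let c and e be linear operators on F-vector spaces V_c and V_e respectively. Suppose there exists a polynomial v ∈ F[t] with v(e) = 0 and v(c) invertible. Then for every linear map y : V_e → V_c the Sylvester equation c∘x − x∘e = y has a unique linear solution x : V_e → V_c; explicitly x = v(c)⁻¹ · v̇_{c,e}(y) where v̇_{c,e}(y) = Σⱼ αⱼ Σ_{i=0}^{j-1} c^{j-i-1} y e^i for v = Σⱼ αⱼ t^j. -/
/-- The derivative-like map `v̇_{c,e}(y) = Σⱼ αⱼ Σ_{i=0}^{j-1} c^{j-i-1} ∘ y ∘ e^i`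
for a polynomial `v = Σⱼ αⱼ tʲ`. -/
noncomputable def polyDot {F Vc Ve : Type*} [Field F]
    [AddCommGroup Vc] [Module F Vc] [AddCommGroup Ve] [Module F Ve]
    (c : Module.End F Vc) (e : Module.End F Ve) (v : Polynomial F)
    (y : Ve →ₗ[F] Vc) : Ve →ₗ[F] Vc :=
  v.sum fun j α => α •
    (Finset.range j).sum fun i => (c ^ (j - i - 1)) ∘ₗ y ∘ₗ (e ^ i)


section Aux

open Polynomial LinearMap

variable {F Vc Ve : Type*} [Field F]
    [AddCommGroup Vc] [Module F Vc] [AddCommGroup Ve] [Module F Ve]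

private noncomputable def Dj (c : Module.End F Vc) (e : Module.End F Ve)
    (j : ℕ) (y : Ve →ₗ[F] Vc) : Ve →ₗ[F] Vc :=
  (Finset.range j).sum fun i => (c ^ (j - i - 1)) ∘ₗ y ∘ₗ (e ^ i)

private lemma Dj_succ (c : Module.End F Vc) (e : Module.End F Ve) (j : ℕ) (y : Ve →ₗ[F] Vc) :
    Dj c e (j+1) y = c ∘ₗ Dj c e j y + y ∘ₗ e ^ j := by
  unfold Dj
  rw [Finset.sum_range_succ]
  have h1 : (∀ i ∈ Finset.range j, (c ^ (j + 1 - i - 1)) ∘ₗ y ∘ₗ (e ^ i)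
      = c ∘ₗ ((c ^ (j - i - 1)) ∘ₗ y ∘ₗ (e ^ i))) := by
    intro i hi
    rw [Finset.mem_range] at hi
    have h2 : j + 1 - i - 1 = (j - i - 1) + 1 := by omega
    rw [h2, pow_succ', Module.End.mul_eq_comp, LinearMap.comp_assoc]
  rw [Finset.sum_congr rfl h1]
  have h3 : j + 1 - j - 1 = 0 := by omega
  rw [h3, pow_zero]
  ext z
  simp [LinearMap.sum_apply]

private lemma key1 (c : Module.End F Vc) (e : Module.End F Ve) (j : ℕ) (x : Ve →ₗ[F] Vc) :
    Dj c e j (c ∘ₗ x - x ∘ₗ e) = (c ^ j) ∘ₗ x - x ∘ₗ (e ^ j) := by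
  induction j with
  | zero => simp [Dj, Module.End.one_eq_id]
  | succ n ih =>
      rw [Dj_succ, ih]
      have hc : ∀ w, c ((c^n) w) = (c^n) (c w) := fun w => by
        simpa [Module.End.mul_apply] using DFunLike.congr_fun ((Commute.refl c).pow_right n).eq w
      have he : ∀ w, e ((e^n) w) = (e^n) (e w) := fun w => by
        simpa [Module.End.mul_apply] using DFunLike.congr_fun ((Commute.refl e).pow_right n).eq w
      ext z
      simp [pow_succ, pow_succ', Module.End.mul_eq_comp, LinearMap.sub_comp,
        LinearMap.comp_sub, LinearMap.comp_assoc, hc, he]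

private lemma key2 (c : Module.End F Vc) (e : Module.End F Ve) (j : ℕ) (y : Ve →ₗ[F] Vc) :
    c ∘ₗ Dj c e j y - Dj c e j y ∘ₗ e = (c ^ j) ∘ₗ y - y ∘ₗ (e ^ j) := by
  induction j with
  | zero => simp [Dj, Module.End.one_eq_id]
  | succ n ih =>
      rw [Dj_succ]
      have h : c ∘ₗ (c ∘ₗ Dj c e n y + y ∘ₗ e ^ n) - (c ∘ₗ Dj c e n y + y ∘ₗ e ^ n) ∘ₗ e
          = c ∘ₗ (c ∘ₗ Dj c e n y - Dj c e n y ∘ₗ e) + (c ∘ₗ (y ∘ₗ e ^ n)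
            - (y ∘ₗ e ^ n) ∘ₗ e) - (c ∘ₗ (Dj c e n y ∘ₗ e) - (c ∘ₗ Dj c e n y) ∘ₗ e) := by
        ext z; simp; abel
      rw [h, ih]
      have hc : ∀ w, c ((c^n) w) = (c^n) (c w) := fun w => by
        simpa [Module.End.mul_apply] using DFunLike.congr_fun ((Commute.refl c).pow_right n).eq w
      have he : ∀ w, e ((e^n) w) = (e^n) (e w) := fun w => by
        simpa [Module.End.mul_apply] using DFunLike.congr_fun ((Commute.refl e).pow_right n).eq w
      ext z
      simp [pow_succ, pow_succ', Module.End.mul_eq_comp, LinearMap.comp_assoc, hc, he]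

private lemma polyDot_eq_sum (c : Module.End F Vc) (e : Module.End F Ve) (v : Polynomial F)
    (y : Ve →ₗ[F] Vc) :
    polyDot c e v y = ∑ j ∈ v.support, v.coeff j • Dj c e j y := by
  rw [polyDot, Polynomial.sum_def]; rfl

private lemma aeval_eq_sum' (c : Module.End F Vc) (v : Polynomial F) :
    Polynomial.aeval c v = ∑ j ∈ v.support, v.coeff j • c ^ j := by
  rw [Polynomial.aeval_def, Polynomial.eval₂_eq_sum, Polynomial.sum_def]
  exact Finset.sum_congr rfl fun j _ => (Algebra.smul_def _ _).symm

private lemma sum_comp' {ι : Type*} (s : Finset ι) (f : ι → (Vc →ₗ[F] Vc)) (x : Ve →ₗ[F] Vc) :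
    (∑ j ∈ s, f j) ∘ₗ x = ∑ j ∈ s, (f j) ∘ₗ x := by
  ext z; simp [LinearMap.sum_apply]

private lemma comp_sum' {ι : Type*} (s : Finset ι) (f : ι → (Ve →ₗ[F] Ve)) (x : Ve →ₗ[F] Vc) :
    x ∘ₗ (∑ j ∈ s, f j) = ∑ j ∈ s, x ∘ₗ (f j) := by
  ext z; simp [LinearMap.sum_apply]

private lemma main1 (c : Module.End F Vc) (e : Module.End F Ve) (v : Polynomial F)
    (x : Ve →ₗ[F] Vc) :
    polyDot c e v (c ∘ₗ x - x ∘ₗ e)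
      = (Polynomial.aeval c v) ∘ₗ x - x ∘ₗ (Polynomial.aeval e v) := by
  rw [polyDot_eq_sum, aeval_eq_sum', aeval_eq_sum', sum_comp', comp_sum',
    ← Finset.sum_sub_distrib]
  refine Finset.sum_congr rfl fun j _ => ?_
  rw [key1]
  ext z; simp [smul_sub]

private lemma main2 (c : Module.End F Vc) (e : Module.End F Ve) (v : Polynomial F)
    (y : Ve →ₗ[F] Vc) :
    c ∘ₗ polyDot c e v y - polyDot c e v y ∘ₗ e
      = (Polynomial.aeval c v) ∘ₗ y - y ∘ₗ (Polynomial.aeval e v) := by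
  rw [polyDot_eq_sum, aeval_eq_sum', aeval_eq_sum', sum_comp', comp_sum',
    ← Finset.sum_sub_distrib]
  have h : c ∘ₗ (∑ j ∈ v.support, v.coeff j • Dj c e j y)
      - (∑ j ∈ v.support, v.coeff j • Dj c e j y) ∘ₗ e
      = ∑ j ∈ v.support, v.coeff j • (c ∘ₗ Dj c e j y - Dj c e j y ∘ₗ e) := by
    ext z; simp [LinearMap.sum_apply, smul_sub, Finset.sum_sub_distrib]
  rw [h]
  refine Finset.sum_congr rfl fun j _ => ?_
  rw [key2]
  ext z; simp [smul_sub]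


end Aux

/-- If `v(e) = 0` and `v(c)` is invertible, then the Sylvester equation
`c x − x e = y` has a unique solution, explicitly given by
`x = v(c)⁻¹ v̇_{c,e}(y)`. -/
theorem sylvester_unique_solution
    {F Vc Ve : Type*} [Field F]
    [AddCommGroup Vc] [Module F Vc] [AddCommGroup Ve] [Module F Ve]
    (c : Module.End F Vc) (e : Module.End F Ve) (v : Polynomial F)
    (hve : Polynomial.aeval e v = 0) (hvc : IsUnit (Polynomial.aeval c v))
    (y : Ve →ₗ[F] Vc) :
    (∃! x : Ve →ₗ[F] Vc, c ∘ₗ x - x ∘ₗ e = y) ∧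
      (∀ x : Ve →ₗ[F] Vc, c ∘ₗ x - x ∘ₗ e = y →
        (Polynomial.aeval c v) ∘ₗ x = polyDot c e v y) := by
  obtain ⟨w, hw⟩ := hvc
  have hmain : ∀ x : Ve →ₗ[F] Vc, c ∘ₗ x - x ∘ₗ e = y →
      (Polynomial.aeval c v) ∘ₗ x = polyDot c e v y := by
    intro x hx
    have h := main1 c e v x
    rw [hx, hve] at h
    simpa using h.symm
  refine ⟨⟨(↑w⁻¹ : Module.End F Vc) ∘ₗ polyDot c e v y, ?_, ?_⟩, hmain⟩
  · -- existence
    have hcomm : Commute c (Polynomial.aeval c v) := by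
      have h1 : Polynomial.aeval c (Polynomial.X * v) = Polynomial.aeval c (v * Polynomial.X) := by
        rw [mul_comm]
      show c * _ = _ * c
      simpa [map_mul] using h1
    have hcw : Commute c (↑w⁻¹ : Module.End F Vc) := by
      have h2 : Commute c (↑w : Module.End F Vc) := hw ▸ hcomm
      exact h2.units_inv_right
    have step : c ∘ₗ ((↑w⁻¹ : Module.End F Vc) ∘ₗ polyDot c e v y)
        - ((↑w⁻¹ : Module.End F Vc) ∘ₗ polyDot c e v y) ∘ₗ e
        = (↑w⁻¹ : Module.End F Vc) ∘ₗ (c ∘ₗ polyDot c e v y - polyDot c e v y ∘ₗ e) := by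
      rw [← LinearMap.comp_assoc, ← Module.End.mul_eq_comp c, hcw.eq,
        Module.End.mul_eq_comp, LinearMap.comp_assoc, LinearMap.comp_sub,
        LinearMap.comp_assoc]
    show c ∘ₗ ((↑w⁻¹ : Module.End F Vc) ∘ₗ polyDot c e v y)
        - ((↑w⁻¹ : Module.End F Vc) ∘ₗ polyDot c e v y) ∘ₗ e = y
    rw [step, main2, hve]
    have h3 : (↑w⁻¹ : Module.End F Vc) ∘ₗ ((Polynomial.aeval c v) ∘ₗ y) = y := by
      rw [← LinearMap.comp_assoc, ← hw, ← Module.End.mul_eq_comp]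
      simp [Module.End.one_eq_id]
    simpa using h3
  · intro x hx
    have h1 := hmain x hx
    have h2 : (↑w⁻¹ : Module.End F Vc) ∘ₗ ((Polynomial.aeval c v) ∘ₗ x)
        = (↑w⁻¹ : Module.End F Vc) ∘ₗ polyDot c e v y := by rw [h1]
    rw [← LinearMap.comp_assoc, ← hw, ← Module.End.mul_eq_comp] at h2
    simpa [Module.End.one_eq_id] using h2
end

section
/- Let c and e be linear operators on F-vector spaces V_c and V_e, and suppose V_e = ⋃ₙ ker(q(e)ⁿ) for some polynomial q ∈ F[t] with q(c) invertible. Then for every linear map y : V_e → V_c the equation c∘x − x∘e = y has a linear solution x : V_e → V_c. -/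
open Polynomial

/-- Divided-difference lemma: for any polynomial `f` there is a linear map `d` with
`c ∘ d - d ∘ e = f(c) ∘ y - y ∘ f(e)`. -/
theorem sylvester_aux_dd {F Vc Ve : Type*} [Field F]
    [AddCommGroup Vc] [Module F Vc] [AddCommGroup Ve] [Module F Ve]
    (c : Module.End F Vc) (e : Module.End F Ve) (y : Ve →ₗ[F] Vc) (f : Polynomial F) :
    ∃ d : Ve →ₗ[F] Vc, c ∘ₗ d - d ∘ₗ e = (aeval c f) ∘ₗ y - y ∘ₗ (aeval e f) := by
  induction f using Polynomial.induction_on with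
  | C a =>
      refine ⟨0, ?_⟩
      ext ξ
      simp [Module.algebraMap_end_apply]
  | add p r hp hr =>
      obtain ⟨d1, h1⟩ := hp; obtain ⟨d2, h2⟩ := hr
      refine ⟨d1 + d2, ?_⟩
      ext ξ
      have g1 := LinearMap.congr_fun h1 ξ
      have g2 := LinearMap.congr_fun h2 ξ
      simp at *
      linear_combination (norm := module) g1 + g2
  | monomial n a hd =>
      obtain ⟨d, hd⟩ := hd
      refine ⟨c ∘ₗ d + y ∘ₗ (aeval e (C a * X ^ n)), ?_⟩
      ext ξ
      have h1 := congrArg c (LinearMap.congr_fun hd ξ)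
      have hcomm : (c ^ n) (c (y ξ)) = c ((c ^ n) (y ξ)) := by
        rw [← Module.End.mul_apply, ← pow_succ, pow_succ', Module.End.mul_apply]
      simp [pow_succ, map_sub] at *
      linear_combination (norm := module) h1 - a • hcomm

/-- If `V_e = ⋃ₙ ker(q(e)ⁿ)` for a polynomial `q` with `q(c)` invertible, then the
Sylvester equation `c x − x e = y` has a linear solution for every `y`. -/
theorem sylvester_solution_of_locally_torsion
    {F Vc Ve : Type*} [Field F]
    [AddCommGroup Vc] [Module F Vc] [AddCommGroup Ve] [Module F Ve]
    (c : Module.End F Vc) (e : Module.End F Ve) (q : Polynomial F)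
    (hloc : ∀ ξ : Ve, ∃ n : ℕ, ((Polynomial.aeval e q) ^ n) ξ = 0)
    (hqc : IsUnit (Polynomial.aeval c q))
    (y : Ve →ₗ[F] Vc) :
    ∃ x : Ve →ₗ[F] Vc, c ∘ₗ x - x ∘ₗ e = y := by
  classical
  obtain ⟨d, hd⟩ := sylvester_aux_dd c e y q
  set qc : Module.End F Vc := aeval c q with hqcdef
  set qe : Module.End F Ve := aeval e q with hqedef
  -- c commutes with qc, e commutes with qe
  have hcc : Commute c qc := by
    simpa [hqcdef] using ((Commute.all (X : Polynomial F) q).map (aeval c))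
  have hee : Commute e qe := by
    simpa [hqedef] using ((Commute.all (X : Polynomial F) q).map (aeval e))
  -- the recursively defined divided differences of q^n
  let D : ℕ → (Ve →ₗ[F] Vc) := fun n =>
    Nat.rec 0 (fun m Dm => qc ∘ₗ Dm + d ∘ₗ (qe ^ m : Module.End F Ve)) n
  have hD0 : D 0 = 0 := rfl
  have hDsucc : ∀ m, D (m + 1) = qc ∘ₗ D m + d ∘ₗ (qe ^ m : Module.End F Ve) := fun m => rfl
  -- key identity (A)
  have hA : ∀ n, c ∘ₗ D n - D n ∘ₗ e
      = ((qc ^ n : Module.End F Vc)) ∘ₗ y - y ∘ₗ ((qe ^ n : Module.End F Ve)) := by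
    intro n
    induction n with
    | zero => ext ξ; simp [hD0]
    | succ m ih =>
        rw [hDsucc]
        ext ξ
        have g1 := congrArg qc (LinearMap.congr_fun ih ξ)
        have g2 := LinearMap.congr_fun hd ((qe ^ m) ξ)
        have hc1 : qc (c (D m ξ)) = c (qc (D m ξ)) := by
          rw [← Module.End.mul_apply, ← hcc.eq, Module.End.mul_apply]
        have hc2 : qc ((qc ^ m) (y ξ)) = (qc ^ m) (qc (y ξ)) := by
          rw [← Module.End.mul_apply, (Commute.self_pow qc m).eq, Module.End.mul_apply]
        have he1 : (qe ^ m) (e ξ) = e ((qe ^ m) ξ) := by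
          rw [← Module.End.mul_apply, ← (hee.pow_right m).eq, Module.End.mul_apply]
        have he2 : (qe ^ m) (qe ξ) = qe ((qe ^ m) ξ) := by
          rw [← Module.End.mul_apply, ← (Commute.self_pow qe m).eq, Module.End.mul_apply]
        simp [pow_succ, map_sub] at g1 g2 ⊢
        linear_combination (norm := module) g1 + g2 - hc1 + hc2
          - (LinearMap.congr_arg (f := d) he1) + (LinearMap.congr_arg (f := y) he2)
  -- the inverse unit
  set u : (Module.End F Vc)ˣ := hqc.unit with hu
  have huval : (u : Module.End F Vc) = qc := rfl
  -- local solutions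
  let xn : ℕ → (Ve →ₗ[F] Vc) := fun n => ((u⁻¹ ^ n : (Module.End F Vc)ˣ) : Module.End F Vc) ∘ₗ D n
  -- well-definedness
  have hstable : ∀ n m ξ, (qe ^ n) ξ = 0 → n ≤ m → (qe ^ m) ξ = 0 := by
    intro n m ξ h hnm
    obtain ⟨k, rfl⟩ := Nat.exists_eq_add_of_le hnm
    rw [add_comm, pow_add, Module.End.mul_apply, h, map_zero]
  have hwd : ∀ n m ξ, n ≤ m → (qe ^ n) ξ = 0 → xn m ξ = xn n ξ := by
    intro n m ξ hnm h0
    induction m with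
    | zero => cases Nat.le_zero.mp hnm; rfl
    | succ k ih =>
        rcases Nat.lt_or_ge n (k + 1) with hlt | hge
        · have hnk : n ≤ k := Nat.lt_succ_iff.mp hlt
          have hk0 : (qe ^ k) ξ = 0 := hstable n k ξ h0 hnk
          have step : xn (k + 1) ξ = xn k ξ := by
            show ((u⁻¹ ^ (k+1) : (Module.End F Vc)ˣ) : Module.End F Vc) (D (k+1) ξ)
              = ((u⁻¹ ^ k : (Module.End F Vc)ˣ) : Module.End F Vc) (D k ξ)
            rw [hDsucc]
            simp only [LinearMap.add_apply, LinearMap.comp_apply, hk0, map_zero, add_zero]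
            have : ((u⁻¹ ^ (k+1) : (Module.End F Vc)ˣ) : Module.End F Vc) * qc
                = ((u⁻¹ ^ k : (Module.End F Vc)ˣ) : Module.End F Vc) := by
              rw [← huval, ← Units.val_mul, pow_succ, mul_assoc, inv_mul_cancel, mul_one]
            rw [← Module.End.mul_apply, this]
          rw [step, ih hnk]
        · have : n = k + 1 := le_antisymm hnm hge
          subst this; rfl
  -- the candidate solution as a raw function
  let nof : Ve → ℕ := fun ξ => (hloc ξ).choose
  have hnof : ∀ ξ, (qe ^ nof ξ) ξ = 0 := fun ξ => (hloc ξ).choose_spec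
  let x0 : Ve → Vc := fun ξ => xn (nof ξ) ξ
  have hx0 : ∀ ξ n, (qe ^ n) ξ = 0 → x0 ξ = xn n ξ := by
    intro ξ n hn
    have h1 := hwd (nof ξ) (max n (nof ξ)) ξ (le_max_right _ _) (hnof ξ)
    have h2 := hwd n (max n (nof ξ)) ξ (le_max_left _ _) hn
    simp only [x0]; rw [← h1, h2]
  refine ⟨{ toFun := x0
            map_add' := ?_
            map_smul' := ?_ }, ?_⟩
  · intro ξ η
    set N := max (nof ξ) (nof η) with hN
    have hξ : (qe ^ N) ξ = 0 := hstable _ _ _ (hnof ξ) (le_max_left _ _)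
    have hη : (qe ^ N) η = 0 := hstable _ _ _ (hnof η) (le_max_right _ _)
    have hsum : (qe ^ N) (ξ + η) = 0 := by rw [map_add, hξ, hη, add_zero]
    rw [hx0 (ξ + η) N hsum, hx0 ξ N hξ, hx0 η N hη, map_add]
  · intro a ξ
    have hs : (qe ^ nof ξ) (a • ξ) = 0 := by rw [map_smul, hnof ξ, smul_zero]
    simp only [RingHom.id_apply]
    rw [hx0 (a • ξ) (nof ξ) hs, map_smul]
  · ext ξ
    simp only [LinearMap.sub_apply, LinearMap.comp_apply, LinearMap.coe_mk, AddHom.coe_mk]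
    set n := nof ξ with hn
    have heξ : (qe ^ n) (e ξ) = 0 := by
      rw [← Module.End.mul_apply, ← (hee.pow_right n).eq, Module.End.mul_apply, hnof ξ, map_zero]
    rw [show x0 ξ = xn n ξ from rfl, hx0 (e ξ) n heξ]
    -- now compute
    have hcu : Commute c ((u⁻¹ ^ n : (Module.End F Vc)ˣ) : Module.End F Vc) := by
      have h1 : Commute c (u : Module.End F Vc) := by rw [huval]; exact hcc
      rw [Units.val_pow_eq_pow_val]
      exact h1.units_inv_right.pow_right n
    have hAξ := LinearMap.congr_fun (hA n) ξ
    simp only [LinearMap.sub_apply, LinearMap.comp_apply] at hAξ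
    rw [hnof ξ, map_zero, sub_zero] at hAξ
    calc c (xn n ξ) - xn n (e ξ)
        = c (((u⁻¹ ^ n : (Module.End F Vc)ˣ) : Module.End F Vc) (D n ξ))
          - ((u⁻¹ ^ n : (Module.End F Vc)ˣ) : Module.End F Vc) (D n (e ξ)) := rfl
      _ = ((u⁻¹ ^ n : (Module.End F Vc)ˣ) : Module.End F Vc) (c (D n ξ) - D n (e ξ)) := by
          rw [map_sub, ← Module.End.mul_apply, hcu.eq, Module.End.mul_apply]
      _ = ((u⁻¹ ^ n : (Module.End F Vc)ˣ) : Module.End F Vc) ((qc ^ n) (y ξ)) := by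
          rw [hAξ]
      _ = y ξ := by
          rw [← Module.End.mul_apply]
          have : ((u⁻¹ ^ n : (Module.End F Vc)ˣ) : Module.End F Vc) * (qc ^ n)
              = 1 := by
            rw [← huval, ← Units.val_pow_eq_pow_val, ← Units.val_mul, inv_pow,
              inv_mul_cancel, Units.val_one]
          rw [this, Module.End.one_apply]
end

section
/- Let F be a field, V = F^(ℕ), and let a ∈ L(V) be the right shift. Then the inner derivation d_a : L(V) → L(V), d_a(x) = ax − xa, is surjective. -/
/-- The inner derivation `d_a(x) = ax − xa` induced by the right shift `a` on
`F^(ℕ)` is surjective on `L(V)`. -/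
theorem innerDerivation_rightShift_surjective (F : Type*) [Field F] :
    Function.Surjective (fun x : Module.End F (ℕ →₀ F) =>
      rightShift F ∘ₗ x - x ∘ₗ rightShift F) := by
  intro y
  set a := rightShift F with ha
  -- recursively defined columns of the solution x
  let v : ℕ → (ℕ →₀ F) := fun n =>
    Nat.rec (0 : ℕ →₀ F) (fun k vk => a vk - y (Finsupp.single k 1)) n
  refine ⟨Finsupp.linearCombination F v, ?_⟩
  apply Finsupp.lhom_ext
  intro n b
  have hx : ∀ m (c : F), (Finsupp.linearCombination F v) (Finsupp.single m c) = c • v m := by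
    intro m c; simp [Finsupp.linearCombination_single]
  have hs : a (Finsupp.single n b) = Finsupp.single (n + 1) b := by
    simp [ha, rightShift, Finsupp.lmapDomain_apply, Finsupp.mapDomain_single]
  have hsingle : Finsupp.single n b = b • Finsupp.single n (1 : F) := by
    simp [Finsupp.smul_single]
  have hv : v (n + 1) = a (v n) - y (Finsupp.single n 1) := rfl
  simp only [LinearMap.sub_apply, LinearMap.comp_apply, hs, hx]
  rw [hv, map_smul, hsingle, map_smul, smul_sub]
  abel
end

section
/- Let a, b ∈ L(V) and suppose a has property (A), i.e. {a*}'' in L(V*) equals {c* : c ∈ {a}''}. Then ker d_a ⊆ ker d_b (i.e., every operator commuting with a commutes with b) if and only if d_b(F(V)) ⊆ d_a(F(V)), where F(V) is the space of finite-rank operators on V. -/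
/-- The set of finite rank operators on `V`. -/
def finRank (F V : Type*) [Field F] [AddCommGroup V] [Module F V] :
    Set (Module.End F V) :=
  {x | Module.Finite F (LinearMap.range x)}

open TensorProduct Module

section Aux

variable {F V : Type*} [Field F] [AddCommGroup V] [Module F V]

/-- The map `V ⊗ V* → L(V)`, `v ⊗ f ↦ (u ↦ f u • v)`. -/
noncomputable def auxPhi (F V : Type*) [Field F] [AddCommGroup V] [Module F V] :
    V ⊗[F] Module.Dual F V →ₗ[F] Module.End F V :=
  TensorProduct.lift (LinearMap.mk₂ F (fun v f => LinearMap.smulRight f v)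
    (fun v v' f => by ext u; simp [smul_add])
    (fun c v f => by
      ext u
      simp only [LinearMap.smulRight_apply, LinearMap.smul_apply]
      rw [smul_comm])
    (fun v f f' => by ext u; simp [add_smul])
    (fun c v f => by ext u; simp [LinearMap.smul_apply, mul_smul]))

@[simp] lemma auxPhi_tmul (v : V) (f : Module.Dual F V) (u : V) :
    auxPhi F V (v ⊗ₜ f) u = f u • v := by simp [auxPhi]

/-- The pairing of `L(V*)` against `V ⊗ V*`: `⟨g, v ⊗ f⟩ = (g f) v`. -/
noncomputable def auxPair (g : Module.End F (Module.Dual F V)) :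
    V ⊗[F] Module.Dual F V →ₗ[F] F :=
  TensorProduct.lift (LinearMap.mk₂ F (fun v f => g f v)
    (fun v v' f => by simp)
    (fun c v f => by simp)
    (fun v f f' => by simp)
    (fun c v f => by simp))

@[simp] lemma auxPair_tmul (g : Module.End F (Module.Dual F V)) (v : V) (f : Module.Dual F V) :
    auxPair g (v ⊗ₜ f) = g f v := rfl

/-- The tensor model of the derivation `d_a` on `V ⊗ V*`. -/
noncomputable def auxDelta (a : Module.End F V) :
    V ⊗[F] Module.Dual F V →ₗ[F] V ⊗[F] Module.Dual F V where
  toFun t := LinearMap.rTensor (Module.Dual F V) (a : V →ₗ[F] V) t -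
    LinearMap.lTensor V (a.dualMap : Module.Dual F V →ₗ[F] Module.Dual F V) t
  map_add' x y := by simp only [map_add]; abel
  map_smul' c x := by simp only [map_smul, RingHom.id_apply, smul_sub]

lemma auxDelta_tmul (a : Module.End F V) (v : V) (f : Module.Dual F V) :
    auxDelta a (v ⊗ₜ f) = (a v) ⊗ₜ f - v ⊗ₜ (a.dualMap f) := by
  simp [auxDelta]

lemma auxPhi_delta (a : Module.End F V) (t : V ⊗[F] Module.Dual F V) :
    auxPhi F V (auxDelta a t) = a ∘ₗ auxPhi F V t - auxPhi F V t ∘ₗ a := by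
  induction t using TensorProduct.induction_on with
  | zero => simp
  | tmul v f =>
      ext u
      rw [auxDelta_tmul]
      simp only [map_sub, LinearMap.sub_apply, auxPhi_tmul, LinearMap.comp_apply,
        LinearMap.dualMap_apply, map_smul]
  | add x y hx hy =>
      rw [map_add, map_add, hx, hy]
      ext u
      simp only [LinearMap.add_apply, LinearMap.sub_apply, LinearMap.comp_apply, map_add]
      abel

lemma auxPair_delta (g : Module.End F (Module.Dual F V)) (a : Module.End F V)
    (t : V ⊗[F] Module.Dual F V) :
    auxPair g (auxDelta a t) = auxPair (a.dualMap * g - g * a.dualMap) t := by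
  induction t using TensorProduct.induction_on with
  | zero => simp
  | tmul v f =>
      rw [auxDelta_tmul]
      simp only [map_sub, auxPair_tmul, LinearMap.sub_apply, Module.End.mul_apply,
        LinearMap.dualMap_apply]
  | add x y hx hy =>
      rw [map_add, map_add, hx, hy]
      exact (map_add _ x y).symm

lemma auxPair_eq_zero (g : Module.End F (Module.Dual F V))
    (h : ∀ t : V ⊗[F] Module.Dual F V, auxPair g t = 0) : g = 0 := by
  ext f v
  simpa using h (v ⊗ₜ f)

lemma auxPair_zero_op (t : V ⊗[F] Module.Dual F V) :
    auxPair (0 : Module.End F (Module.Dual F V)) t = 0 := by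
  induction t using TensorProduct.induction_on with
  | zero => simp
  | tmul v f => simp
  | add x y hx hy => rw [map_add, hx, hy, add_zero]

lemma auxPair_surj (φ : V ⊗[F] Module.Dual F V →ₗ[F] F) :
    ∃ g : Module.End F (Module.Dual F V), auxPair g = φ := by
  refine ⟨{ toFun := fun f => φ ∘ₗ ((TensorProduct.mk F V (Module.Dual F V)).flip f)
            map_add' := ?_
            map_smul' := ?_ }, ?_⟩
  · intro f f'; ext v; simp [TensorProduct.tmul_add]
  · intro c f; ext v; simp [TensorProduct.tmul_smul]
  · apply TensorProduct.ext'
    intro v f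
    simp [auxPair]

lemma auxPhi_injective : Function.Injective (auxPhi F V) := by
  rw [injective_iff_map_eq_zero]
  intro t ht
  classical
  obtain ⟨S, rfl⟩ := TensorProduct.exists_finset t
  set b := Basis.ofVectorSpace F V with hb
  set s : Finset (Basis.ofVectorSpaceIndex F V) :=
    S.sup (fun p => (b.repr p.1).support) with hs
  set σ : Basis.ofVectorSpaceIndex F V → Module.Dual F V :=
    fun i => ∑ p ∈ S, b.repr p.1 i • p.2 with hσ
  have key : (S.sum fun p => p.1 ⊗ₜ[F] p.2) = ∑ i ∈ s, b i ⊗ₜ[F] σ i := by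
    rw [hσ]
    simp_rw [TensorProduct.tmul_sum, TensorProduct.tmul_smul]
    rw [Finset.sum_comm]
    refine Finset.sum_congr rfl fun p hp => ?_
    have hsub : (b.repr p.1).support ⊆ s := by
      rw [hs]; exact Finset.le_sup (f := fun p => (b.repr p.1).support) hp
    calc p.1 ⊗ₜ[F] p.2 = (∑ i ∈ s, b.repr p.1 i • b i) ⊗ₜ[F] p.2 := by
          congr 1
          rw [← Finsupp.sum_of_support_subset _ hsub (fun i c => c • b i) (by simp),
            ← Finsupp.linearCombination_apply]
          exact (b.linearCombination_repr p.1).symm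
      _ = ∑ i ∈ s, b.repr p.1 i • b i ⊗ₜ[F] p.2 := by
          rw [TensorProduct.sum_tmul]
          simp_rw [TensorProduct.smul_tmul']
  rw [key] at ht ⊢
  have hσ0 : ∀ i ∈ s, σ i = 0 := by
    intro i hi
    ext u
    have h1 : ∑ j ∈ s, σ j u • b j = 0 := by
      have h2 := congrArg (fun m : Module.End F V => m u) ht
      simpa [map_sum] using h2
    have h3 := linearIndependent_iff'.mp b.linearIndependent s (fun j => σ j u) h1 i hi
    simpa using h3
  calc ∑ i ∈ s, b i ⊗ₜ[F] σ i = ∑ i ∈ s, (0 : V ⊗[F] Module.Dual F V) :=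
        Finset.sum_congr rfl fun i hi => by rw [hσ0 i hi]; simp
    _ = 0 := by simp

lemma finRank_eq_range : finRank F V = Set.range (auxPhi F V) := by
  apply Set.Subset.antisymm
  · intro x hx
    haveI : FiniteDimensional F (LinearMap.range x) := hx
    set n := Module.finrank F (LinearMap.range x)
    set c : Basis (Fin n) F (LinearMap.range x) := Module.finBasis F _
    refine ⟨∑ i, ((c i : V) ⊗ₜ[F] ((c.coord i) ∘ₗ x.rangeRestrict)), ?_⟩
    ext u
    rw [map_sum]
    simp only [LinearMap.coe_sum, Finset.sum_apply, auxPhi_tmul, LinearMap.comp_apply,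
      Basis.coord_apply]
    have h1 : ((∑ i, c.repr (x.rangeRestrict u) i • c i : LinearMap.range x) : V) =
        ∑ i, c.repr (x.rangeRestrict u) i • (c i : V) := by
      push_cast
      rfl
    rw [← h1, c.sum_repr (x.rangeRestrict u)]
    rfl
  · rintro _ ⟨t, rfl⟩
    show Module.Finite F (LinearMap.range (auxPhi F V t))
    induction t using TensorProduct.induction_on with
    | zero => rw [map_zero, LinearMap.range_zero]; infer_instance
    | tmul v f =>
        have hle : LinearMap.range (auxPhi F V (v ⊗ₜ[F] f)) ≤ Submodule.span F {v} := by
          rintro _ ⟨u, rfl⟩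
          simp only [auxPhi_tmul]
          exact Submodule.smul_mem _ _ (Submodule.mem_span_singleton_self v)
        exact Submodule.finiteDimensional_of_le hle
    | add y z hy hz =>
        rw [map_add]
        have hle : LinearMap.range (auxPhi F V y + auxPhi F V z) ≤
            LinearMap.range (auxPhi F V y) ⊔ LinearMap.range (auxPhi F V z) := by
          rintro _ ⟨u, rfl⟩
          exact Submodule.add_mem_sup (LinearMap.mem_range_self _ u) (LinearMap.mem_range_self _ u)
        haveI : FiniteDimensional F (LinearMap.range (auxPhi F V y)) := hy
        haveI : FiniteDimensional F (LinearMap.range (auxPhi F V z)) := hz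
        exact Submodule.finiteDimensional_of_le hle

lemma commutant_subset_iff (a b : Module.End F V) :
    commutant {a} ⊆ commutant {b} ↔ b ∈ commutant (commutant ({a} : Set (Module.End F V))) := by
  constructor
  · intro h x hx
    exact (h hx b rfl).symm
  · intro h x hx s hs
    rw [Set.mem_singleton_iff] at hs
    subst hs
    exact (h x hx).symm

lemma dualMap_inj (c d : Module.End F V)
    (h : (c.dualMap : Module.End F (Module.Dual F V)) = d.dualMap) : c = d := by
  ext u
  rw [← sub_eq_zero, ← (Module.forall_dual_apply_eq_zero_iff F (c u - d u))]
  intro φ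
  have h2 : c.dualMap φ = d.dualMap φ := by rw [h]
  have h3 : φ (c u) = φ (d u) := congrArg (fun ψ : Module.Dual F V => ψ u) h2
  simp [map_sub, h3]

end Aux

/-- Under property (A) for `a` (the bicommutant of `a*` is the set of adjoints of
elements of the bicommutant of `a`), `ker d_a ⊆ ker d_b` if and only if
`d_b(F(V)) ⊆ d_a(F(V))`. -/
theorem ker_derivation_subset_iff_finite_rank_range_subset
    {F V : Type*} [Field F] [AddCommGroup V] [Module F V]
    (a b : Module.End F V)
    (hA : commutant (commutant
        ({(a.dualMap : Module.End F (Module.Dual F V))} :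
          Set (Module.End F (Module.Dual F V)))) =
      (fun c : Module.End F V => (c.dualMap : Module.End F (Module.Dual F V))) ''
        commutant (commutant {a})) :
    ({x : Module.End F V | a ∘ₗ x - x ∘ₗ a = 0} ⊆
        {x : Module.End F V | b ∘ₗ x - x ∘ₗ b = 0}) ↔
      (fun x : Module.End F V => b ∘ₗ x - x ∘ₗ b) '' finRank F V ⊆
        (fun x : Module.End F V => a ∘ₗ x - x ∘ₗ a) '' finRank F V := by
  classical
  have hset : ∀ c : Module.End F V,
      {x : Module.End F V | c ∘ₗ x - x ∘ₗ c = 0} = commutant {c} := by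
    intro c
    ext x
    simp only [Set.mem_setOf_eq, commutant, Set.mem_singleton_iff, forall_eq, sub_eq_zero,
      Module.End.mul_eq_comp]
    exact eq_comm
  rw [hset a, hset b, commutant_subset_iff]
  have himg : ∀ c : Module.End F V,
      (fun x : Module.End F V => c ∘ₗ x - x ∘ₗ c) '' finRank F V =
        Set.range (fun t : V ⊗[F] Module.Dual F V => auxPhi F V (auxDelta c t)) := by
    intro c
    rw [finRank_eq_range, ← Set.range_comp]
    have hfe : ((fun x : Module.End F V => c ∘ₗ x - x ∘ₗ c) ∘ (auxPhi F V)) =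
        fun t : V ⊗[F] Module.Dual F V => auxPhi F V (auxDelta c t) := by
      funext t
      exact (auxPhi_delta c t).symm
    rw [hfe]
  rw [himg a, himg b]
  have hR : (Set.range (fun t : V ⊗[F] Module.Dual F V => auxPhi F V (auxDelta b t)) ⊆
        Set.range (fun t : V ⊗[F] Module.Dual F V => auxPhi F V (auxDelta a t))) ↔
      (∀ t, ∃ s, auxDelta a s = auxDelta b t) := by
    rw [Set.range_subset_iff]
    constructor
    · intro h t
      obtain ⟨s, hs⟩ := h t
      exact ⟨s, auxPhi_injective hs⟩
    · intro h t
      obtain ⟨s, hs⟩ := h t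
      exact ⟨s, by show auxPhi F V (auxDelta a s) = _; rw [hs]⟩
  rw [hR]
  have hP3 : b ∈ commutant (commutant ({a} : Set (Module.End F V))) ↔
      (b.dualMap : Module.End F (Module.Dual F V)) ∈
        commutant (commutant ({a.dualMap} : Set (Module.End F (Module.Dual F V)))) := by
    rw [hA]
    constructor
    · intro h; exact ⟨b, h, rfl⟩
    · rintro ⟨c, hc, hcb⟩
      rwa [dualMap_inj c b hcb] at hc
  rw [hP3, ← commutant_subset_iff]
  constructor
  · intro h t
    by_contra hnot
    push_neg at hnot
    have hmem : auxDelta b t ∉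
        (LinearMap.range (auxDelta (F := F) (V := V) a) :
          Submodule F (V ⊗[F] Module.Dual F V)) := by
      rintro ⟨s, hs⟩
      exact hnot s hs
    obtain ⟨φ, hφ1, hφ2⟩ :=
      Submodule.exists_dual_map_eq_bot_of_notMem (R := F)
        (M := V ⊗[F] Module.Dual F V) hmem inferInstance
    obtain ⟨g, rfl⟩ := auxPair_surj φ
    have hga : g ∈ commutant ({a.dualMap} : Set (Module.End F (Module.Dual F V))) := by
      intro x hx
      rw [Set.mem_singleton_iff] at hx
      subst hx
      have h0 : a.dualMap * g - g * a.dualMap = 0 := by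
        apply auxPair_eq_zero
        intro s
        rw [← auxPair_delta]
        have hm : auxDelta a s ∈ LinearMap.range (auxDelta (F := F) (V := V) a) :=
          ⟨s, rfl⟩
        have hm2 : auxPair g (auxDelta a s) ∈ Submodule.map (auxPair g)
            (LinearMap.range (auxDelta (F := F) (V := V) a)) :=
          Submodule.mem_map_of_mem hm
        rw [hφ2] at hm2
        exact (Submodule.mem_bot F).mp hm2
      exact (eq_of_sub_eq_zero h0).symm
    have hgb := h hga b.dualMap rfl
    have h1 : b.dualMap * g - g * b.dualMap = 0 := sub_eq_zero_of_eq hgb.symm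
    apply hφ1
    have h2 := auxPair_delta g b t
    rw [h1, auxPair_zero_op] at h2
    exact h2
  · intro h g hg x hx
    rw [Set.mem_singleton_iff] at hx
    subst hx
    have hga : g * a.dualMap = a.dualMap * g := hg a.dualMap rfl
    have h0 : b.dualMap * g - g * b.dualMap = 0 := by
      apply auxPair_eq_zero
      intro t
      obtain ⟨s, hs⟩ := h t
      rw [← auxPair_delta, ← hs, auxPair_delta,
        sub_eq_zero_of_eq hga.symm, auxPair_zero_op]
    exact (eq_of_sub_eq_zero h0).symm
end
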